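/- Let R and S be rings, M a right R-module, B an (R,S)-bimodule, σ a k-partitioned pp formula for right S-modules, ā a k-partitioned tuple from M and b̄ a matching partitioned tuple from B. Then ā⊗b̄ ∈ σ(M⊗_R B) (as a right S-module) if and only if there is a matching k-partitioned pp formula φ for right R-modules such that ā ∈ φ(M) and b̄ ∈ (σ:φ)(B). -/

import Mathlib

/-!
Core framework for formalizing statements from
"Tensor and direct extension of definable subcategories" (M. Prest).

Conventions:
* A *right* `R`-module is a type with `[AddCommGroup M] [Module Rᵐᵒᵖ M]`;
  the right action of `r : R` on `a : M` is `MulOpposite.op r • a`.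
* A *left* `R`-module is a type with `[AddCommGroup L] [Module R L]`.
* An `(R,S)`-bimodule is a type with a left `R`-action and a right `S`-action
  which commute: `[Module R B] [Module Sᵐᵒᵖ B] [SMulCommClass R Sᵐᵒᵖ B]`.
-/

open MulOpposite

universe u v

namespace MTM

/-- A pp formula for (right) `R`-modules, with free variables indexed by `ι`,
bound variables indexed by `κ` and equations indexed by `ε`:
`∃ ȳ (x̄ A + ȳ B = 0)`. -/
structure PP (R : Type u) [Ring R] (ι : Type) : Type (max u 1) where
  κ : Type
  ε : Type
  [fintκ : Fintype κ]
  [fintε : Fintype ε]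
  A : Matrix ι ε R
  B : Matrix κ ε R

attribute [instance] PP.fintκ PP.fintε

namespace PP

variable {R : Type u} [Ring R] {S : Type u} [Ring S] {ι : Type} [Fintype ι]

/-- The solution set of a pp formula in a right `R`-module. -/
def sol (φ : PP R ι) (M : Type v) [AddCommGroup M] [Module Rᵐᵒᵖ M] : Set (ι → M) :=
  { a | ∃ b : φ.κ → M, ∀ j : φ.ε,
      (∑ i, op (φ.A i j) • a i) + (∑ k, op (φ.B k j) • b k) = 0 }

/-- The solution set of a pp formula in a left `R`-module (the formula is then read
with coefficients acting on the left). -/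
def solL (φ : PP R ι) (L : Type v) [AddCommGroup L] [Module R L] : Set (ι → L) :=
  { a | ∃ b : φ.κ → L, ∀ j : φ.ε,
      (∑ i, φ.A i j • a i) + (∑ k, φ.B k j • b k) = 0 }

/-- `φ ≤ ψ` : every solution of `φ` is a solution of `ψ`, in every right `R`-module. -/
def Le (φ ψ : PP R ι) : Prop :=
  ∀ (M : Type u) [AddCommGroup M] [Module Rᵐᵒᵖ M], φ.sol M ⊆ ψ.sol M

/-- The elementary dual `Dφ = ∃ z̄ (x̄ = A z̄ ∧ B z̄ = 0)` of a pp formula for right modules;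
it is a pp formula for left `R`-modules (to be interpreted via `solL`). -/
noncomputable def dual (φ : PP R ι) : PP R ι where
  κ := φ.ε
  ε := ι ⊕ φ.κ
  A := fun i e =>
    letI := Classical.decEq ι
    Sum.elim (fun i' => if i = i' then (1 : R) else 0) (fun _ => (0 : R)) e
  B := fun z e => Sum.elim (fun i' => -(φ.A i' z)) (fun k => φ.B k z) e

/-- Transport of a pp formula along a ring homomorphism (`f⁎φ`). -/
def map (f : R →+* S) (φ : PP R ι) : PP S ι :=
  { κ := φ.κ, ε := φ.ε, A := fun i j => f (φ.A i j), B := fun k j => f (φ.B k j) }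

end PP

variable (R : Type u) [Ring R] (S : Type u) [Ring S]

/-- A pp-pair `φ/ψ` for right `R`-modules: pp formulas (in `n` free variables)
with `ψ(M) ≤ φ(M)` for every right `R`-module `M`. -/
structure PPPair : Type (u + 1) where
  n : ℕ
  num : PP R (Fin n)
  den : PP R (Fin n)
  le : ∀ (M : Type u) [AddCommGroup M] [Module Rᵐᵒᵖ M], den.sol M ⊆ num.sol M

/-- A pp-pair for left `R`-modules. -/
structure PPPairL : Type (u + 1) where
  n : ℕ
  num : PP R (Fin n)
  den : PP R (Fin n)
  le : ∀ (L : Type u) [AddCommGroup L] [Module R L], den.solL L ⊆ num.solL L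

variable {R}

/-- A pp-pair is closed on a right module `M` if the two solution sets agree. -/
def PPPair.ClosedOn (p : PPPair R) (M : Type v) [AddCommGroup M] [Module Rᵐᵒᵖ M] : Prop :=
  p.num.sol M = p.den.sol M

/-- A pp-pair is closed on a left module `L` if the two solution sets agree. -/
def PPPairL.ClosedOn (p : PPPairL R) (L : Type v) [AddCommGroup L] [Module R L] : Prop :=
  p.num.solL L = p.den.solL L

variable (R)

/-- The subcategory (class of modules, as a set of objects of `Mod-R`) defined by
closure of a set of pp-pairs. -/
def definedBy (Φ : Set (PPPair R)) : Set (ModuleCat.{u} Rᵐᵒᵖ) :=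
  { M | ∀ p ∈ Φ, p.ClosedOn M }

/-- The subcategory of left modules defined by closure of a set of pp-pairs. -/
def definedByL (Φ : Set (PPPairL R)) : Set (ModuleCat.{u} R) :=
  { L | ∀ p ∈ Φ, p.ClosedOn L }

/-- A class of right `R`-modules is a definable subcategory if it is the class of
modules on which each pp-pair in some set of pp-pairs is closed. -/
def IsDefinable (D : Set (ModuleCat.{u} Rᵐᵒᵖ)) : Prop :=
  ∃ Φ : Set (PPPair R), D = definedBy R Φ

/-- Definability for classes of left `R`-modules. -/
def IsDefinableL (D : Set (ModuleCat.{u} R)) : Prop :=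
  ∃ Φ : Set (PPPairL R), D = definedByL R Φ

/-- `⟨X⟩`: the smallest definable subcategory of `Mod-R` containing `X`. -/
def gen (X : Set (ModuleCat.{u} Rᵐᵒᵖ)) : Set (ModuleCat.{u} Rᵐᵒᵖ) :=
  ⋂₀ { D | IsDefinable R D ∧ X ⊆ D }

/-- `⟨X⟩` for classes of left modules. -/
def genL (X : Set (ModuleCat.{u} R)) : Set (ModuleCat.{u} R) :=
  ⋂₀ { D | IsDefinableL R D ∧ X ⊆ D }

/-- `φ ≤_𝒳 ψ` for a class `𝒳` of right `R`-modules. -/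
def LeOn (𝒳 : Set (ModuleCat.{u} Rᵐᵒᵖ)) {ι : Type} [Fintype ι] (φ ψ : PP R ι) : Prop :=
  ∀ M ∈ 𝒳, φ.sol M ⊆ ψ.sol M

/-- A pure embedding of right `R`-modules: an injective linear map which reflects
solution sets of pp formulas. -/
def IsPureEmb {M N : Type*} [AddCommGroup M] [Module Rᵐᵒᵖ M]
    [AddCommGroup N] [Module Rᵐᵒᵖ N] (f : M →ₗ[Rᵐᵒᵖ] N) : Prop :=
  Function.Injective f ∧
    ∀ (ι : Type) (_ : Fintype ι) (φ : PP R ι) (a : ι → M),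
      (fun i => f (a i)) ∈ φ.sol N → a ∈ φ.sol M

/-- A pure-injective module: every pure embedding out of it splits. -/
def IsPureInj (N : Type u) [AddCommGroup N] [Module Rᵐᵒᵖ N] : Prop :=
  ∀ (M : Type u) [AddCommGroup M] [Module Rᵐᵒᵖ M] (g : N →ₗ[Rᵐᵒᵖ] M),
    IsPureEmb R g → ∃ h : M →ₗ[Rᵐᵒᵖ] N, h.comp g = LinearMap.id

/-- `N` is an elementary cogenerator for the definable subcategory `D`:
a pure-injective member of `D` such that every member of `D` purely embeds in a
direct power of `N`. -/
def IsElemCogen (D : Set (ModuleCat.{u} Rᵐᵒᵖ)) (N : ModuleCat.{u} Rᵐᵒᵖ) : Prop :=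
  N ∈ D ∧ IsPureInj R N ∧
    ∀ M ∈ D, ∃ (I : Type u) (g : M →ₗ[Rᵐᵒᵖ] (I → N)), IsPureEmb R g

/-- A pure-injective hull of `X`: a minimal pure embedding into a pure-injective. -/
def IsPureInjHull {X H : Type u} [AddCommGroup X] [Module Rᵐᵒᵖ X]
    [AddCommGroup H] [Module Rᵐᵒᵖ H] (h : X →ₗ[Rᵐᵒᵖ] H) : Prop :=
  IsPureEmb R h ∧ IsPureInj R H ∧
    ∀ (Y : Type u) [AddCommGroup Y] [Module Rᵐᵒᵖ Y] (g : H →ₗ[Rᵐᵒᵖ] Y),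
      IsPureEmb R (g.comp h) → IsPureEmb R g

section RingHom

variable (f : R →+* S)

/-- Restriction of scalars of a (bundled) right `S`-module along `f : R →+* S`. -/
noncomputable def resMod (M : ModuleCat.{u} Sᵐᵒᵖ) : ModuleCat.{u} Rᵐᵒᵖ :=
  (ModuleCat.restrictScalars (RingHom.op f)).obj M

/-- The (definable) restriction `C|_R` of a definable subcategory `C` of `Mod-S`
along `f : R → S` : the subcategory of `Mod-R` defined by all pp-pairs `φ/ψ` for
`R`-modules such that `f⁎φ/f⁎ψ` is closed on `C`. -/
def restrictSubcat (C : Set (ModuleCat.{u} Sᵐᵒᵖ)) : Set (ModuleCat.{u} Rᵐᵒᵖ) :=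
  definedBy R { p : PPPair R | ∀ M ∈ C, (p.num.map f).sol M = (p.den.map f).sol M }

/-- The definable trace of `Mod-S` in `Mod-R` along `f`. -/
def DefTr : Set (ModuleCat.{u} Rᵐᵒᵖ) := restrictSubcat R S f Set.univ

/-- The direct extension `D^S` of a definable subcategory `D` of `Mod-R`:
those `S`-modules whose restriction along `f` lies in `D`. -/
def directExt (D : Set (ModuleCat.{u} Rᵐᵒᵖ)) : Set (ModuleCat.{u} Sᵐᵒᵖ) :=
  { M | resMod R S f M ∈ D }

end RingHom

end MTM
-- Tensor product over a (possibly noncommutative) ring.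
namespace MTM

open MulOpposite TensorProduct

universe x
variable (R : Type u) [Ring R] (S : Type u) [Ring S]

section Tensor

variable (M : Type u) [AddCommGroup M] [Module Rᵐᵒᵖ M]
variable (B : Type u) [AddCommGroup B] [Module R B]

/-- The subgroup of `M ⊗_ℤ B` of balancing relations. -/
def tensorRel : Submodule ℤ (TensorProduct ℤ M B) :=
  Submodule.span ℤ
    { x | ∃ (r : R) (m : M) (b : B), x = (op r • m) ⊗ₜ[ℤ] b - m ⊗ₜ[ℤ] (r • b) }

/-- The tensor product `M ⊗_R B` of a right `R`-module and a left `R`-module,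
as the quotient of `M ⊗_ℤ B` by the balancing relations. -/
abbrev RTensor : Type u := TensorProduct ℤ M B ⧸ tensorRel R M B

/-- `m ⊗ b` in `M ⊗_R B`. -/
noncomputable def rtmul (m : M) (b : B) : RTensor R M B := Submodule.Quotient.mk (m ⊗ₜ[ℤ] b)

variable {M B}
variable {M' : Type u} [AddCommGroup M'] [Module Rᵐᵒᵖ M']
variable {B' : Type u} [AddCommGroup B'] [Module R B']

theorem rel_le_B (g : B →ₗ[R] B') :
    tensorRel R M B ≤
      (tensorRel R M B').comap (LinearMap.lTensor M g.toAddMonoidHom.toIntLinearMap) := by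
  refine Submodule.span_le.mpr ?_
  rintro x ⟨r, m, b, rfl⟩
  show (op r • m) ⊗ₜ[ℤ] g b - m ⊗ₜ[ℤ] g (r • b) ∈ tensorRel R M B'
  rw [g.map_smul]
  exact Submodule.subset_span ⟨r, m, g b, rfl⟩

theorem rel_le_M (h : M →ₗ[Rᵐᵒᵖ] M') :
    tensorRel R M B ≤
      (tensorRel R M' B).comap (LinearMap.rTensor B h.toAddMonoidHom.toIntLinearMap) := by
  refine Submodule.span_le.mpr ?_
  rintro x ⟨r, m, b, rfl⟩
  refine Submodule.mem_comap.mpr ?_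
  have e : LinearMap.rTensor B h.toAddMonoidHom.toIntLinearMap
      ((op r • m) ⊗ₜ[ℤ] b - m ⊗ₜ[ℤ] (r • b)) = h (op r • m) ⊗ₜ[ℤ] b - h m ⊗ₜ[ℤ] (r • b) := by
    rw [map_sub, LinearMap.rTensor_tmul, LinearMap.rTensor_tmul]
    rfl
  rw [e, h.map_smul]
  exact Submodule.subset_span ⟨r, h m, b, rfl⟩

/-- Functoriality of `M ⊗_R -` in left `R`-module maps (as a `ℤ`-linear map). -/
noncomputable def mapB (g : B →ₗ[R] B') : RTensor R M B →ₗ[ℤ] RTensor R M B' :=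
  Submodule.mapQ _ _ _ (rel_le_B R g)

/-- Functoriality of `- ⊗_R B` in right `R`-module maps (as a `ℤ`-linear map). -/
noncomputable def mapM (h : M →ₗ[Rᵐᵒᵖ] M') : RTensor R M B →ₗ[ℤ] RTensor R M' B :=
  Submodule.mapQ _ _ _ (rel_le_M R h)

@[simp] theorem mapB_mk (g : B →ₗ[R] B') (y : TensorProduct ℤ M B) :
    mapB R g (Submodule.Quotient.mk y) =
      Submodule.Quotient.mk (LinearMap.lTensor M g.toAddMonoidHom.toIntLinearMap y) :=
  rfl

@[simp] theorem mapM_mk (h : M →ₗ[Rᵐᵒᵖ] M') (y : TensorProduct ℤ M B) :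
    mapM R h (Submodule.Quotient.mk y) =
      Submodule.Quotient.mk (LinearMap.rTensor B h.toAddMonoidHom.toIntLinearMap y) :=
  rfl

section SAction

variable [Module Sᵐᵒᵖ B] [SMulCommClass R Sᵐᵒᵖ B]

/-- The right action of `s : S` on an `(R,S)`-bimodule, as a left `R`-linear map. -/
def sEndo (s : Sᵐᵒᵖ) : B →ₗ[R] B where
  toFun b := s • b
  map_add' x y := smul_add s x y
  map_smul' r b := (smul_comm r s b).symm

variable (M B)

/-- The right `S`-action on `M ⊗_R B` as a ring homomorphism `Sᵐᵒᵖ → End_ℤ (M ⊗_R B)`. -/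
noncomputable def rho : Sᵐᵒᵖ →+* Module.End ℤ (RTensor R M B) where
  toFun s := mapB R (sEndo R S (B := B) s)
  map_one' := by
    refine Submodule.linearMap_qext _ (TensorProduct.ext' fun m b => ?_)
    show Submodule.Quotient.mk (m ⊗ₜ[ℤ] ((1 : Sᵐᵒᵖ) • b)) = Submodule.Quotient.mk (m ⊗ₜ[ℤ] b)
    rw [one_smul]
  map_mul' s s' := by
    refine Submodule.linearMap_qext _ (TensorProduct.ext' fun m b => ?_)
    show Submodule.Quotient.mk (m ⊗ₜ[ℤ] ((s * s') • b)) =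
      Submodule.Quotient.mk (m ⊗ₜ[ℤ] (s • s' • b))
    rw [mul_smul]
  map_zero' := by
    refine Submodule.linearMap_qext _ (TensorProduct.ext' fun m b => ?_)
    show (Submodule.Quotient.mk (m ⊗ₜ[ℤ] ((0 : Sᵐᵒᵖ) • b)) : RTensor R M B) = 0
    rw [zero_smul, TensorProduct.tmul_zero, Submodule.Quotient.mk_zero]
  map_add' s s' := by
    refine Submodule.linearMap_qext _ (TensorProduct.ext' fun m b => ?_)
    show (Submodule.Quotient.mk (m ⊗ₜ[ℤ] ((s + s') • b)) : RTensor R M B) =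
      (Submodule.Quotient.mk (m ⊗ₜ[ℤ] (s • b)) : RTensor R M B) +
        (Submodule.Quotient.mk (m ⊗ₜ[ℤ] (s' • b)) : RTensor R M B)
    rw [add_smul, TensorProduct.tmul_add, Submodule.Quotient.mk_add]

/-- The right `S`-module structure on `M ⊗_R B` for an `(R,S)`-bimodule `B`. -/
noncomputable instance instModS : Module Sᵐᵒᵖ (RTensor R M B) :=
  Module.compHom _ (rho R S M B)

theorem smul_mk (s : Sᵐᵒᵖ) (y : TensorProduct ℤ M B) :
    s • (Submodule.Quotient.mk y : RTensor R M B) =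
      Submodule.Quotient.mk
        (LinearMap.lTensor M ((sEndo R S (B := B) s).toAddMonoidHom.toIntLinearMap) y) :=
  rfl

@[simp] theorem smul_rtmul (s : Sᵐᵒᵖ) (m : M) (b : B) :
    s • rtmul R M B m b = rtmul R M B m (s • b) :=
  rfl

end SAction

end Tensor

end MTM
namespace MTM

open MulOpposite TensorProduct

variable (R : Type u) [Ring R] (S : Type u) [Ring S]

section TensorMaps

variable (M : Type u) [AddCommGroup M] [Module Rᵐᵒᵖ M]
variable {M' : Type u} [AddCommGroup M'] [Module Rᵐᵒᵖ M']
variable (B : Type u) [AddCommGroup B] [Module R B] [Module Sᵐᵒᵖ B] [SMulCommClass R Sᵐᵒᵖ B]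
variable {B' : Type u} [AddCommGroup B'] [Module R B'] [Module Sᵐᵒᵖ B'] [SMulCommClass R Sᵐᵒᵖ B']

/-- Functoriality of `M ⊗_R -` in maps of `(R,S)`-bimodules, as a map of right
`S`-modules. -/
noncomputable def mapBS (g : B →ₗ[R] B') (hg : ∀ (s : Sᵐᵒᵖ) (b : B), g (s • b) = s • g b) :
    RTensor R M B →ₗ[Sᵐᵒᵖ] RTensor R M B' where
  toFun := mapB R g
  map_add' := map_add _
  map_smul' s x := by
    obtain ⟨y, rfl⟩ := Submodule.Quotient.mk_surjective _ x
    show mapB R g (s • Submodule.Quotient.mk y) = s • mapB R g (Submodule.Quotient.mk y)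
    rw [smul_mk R S, mapB_mk, mapB_mk, smul_mk R S,
      ← LinearMap.comp_apply, ← LinearMap.comp_apply, ← LinearMap.lTensor_comp,
      ← LinearMap.lTensor_comp]
    have hcomp : g.toAddMonoidHom.toIntLinearMap ∘ₗ
          (sEndo R S (B := B) s).toAddMonoidHom.toIntLinearMap =
        (sEndo R S (B := B') s).toAddMonoidHom.toIntLinearMap ∘ₗ
          g.toAddMonoidHom.toIntLinearMap := by
      ext b
      exact hg s b
    rw [hcomp]

/-- Functoriality of `- ⊗_R B` in maps of right `R`-modules, as a map of right
`S`-modules. -/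
noncomputable def mapMS (h : M →ₗ[Rᵐᵒᵖ] M') :
    RTensor R M B →ₗ[Sᵐᵒᵖ] RTensor R M' B where
  toFun := mapM R h
  map_add' := map_add _
  map_smul' s x := by
    obtain ⟨y, rfl⟩ := Submodule.Quotient.mk_surjective _ x
    show mapM R h (s • Submodule.Quotient.mk y) = s • mapM R h (Submodule.Quotient.mk y)
    rw [smul_mk R S, mapM_mk, mapM_mk, smul_mk R S,
      ← LinearMap.comp_apply, ← LinearMap.comp_apply, LinearMap.rTensor_comp_lTensor,
      LinearMap.lTensor_comp_rTensor]

end TensorMaps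

section Canonical

variable (M : Type u) [AddCommGroup M] [Module Rᵐᵒᵖ M]

/-- The canonical map `M ⊗_R (∏ᵢ Lᵢ) → ∏ᵢ (M ⊗_R Lᵢ)` for a family of left
`R`-modules, as a `ℤ`-linear map. -/
noncomputable def canonicalL {ι' : Type u} (L : ι' → Type u)
    [∀ i, AddCommGroup (L i)] [∀ i, Module R (L i)] :
    RTensor R M (∀ i, L i) →ₗ[ℤ] ∀ i, RTensor R M (L i) :=
  LinearMap.pi fun i => mapB R (LinearMap.proj i)

/-- The canonical map `M ⊗_R (∏ᵢ Lᵢ) → ∏ᵢ (M ⊗_R Lᵢ)` for a family of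
`(R,S)`-bimodules, as a map of right `S`-modules. -/
noncomputable def canonicalB {ι' : Type u} (L : ι' → Type u)
    [∀ i, AddCommGroup (L i)] [∀ i, Module R (L i)] [∀ i, Module Sᵐᵒᵖ (L i)]
    [∀ i, SMulCommClass R Sᵐᵒᵖ (L i)] :
    RTensor R M (∀ i, L i) →ₗ[Sᵐᵒᵖ] ∀ i, RTensor R M (L i) :=
  LinearMap.pi fun i => mapBS R S M (∀ j, L j) (LinearMap.proj i) (fun _ _ => rfl)

/-- The canonical map `(∏_λ M_λ) ⊗_R B → ∏_λ (M_λ ⊗_R B)` for a family of right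
`R`-modules and an `(R,S)`-bimodule `B`, as a map of right `S`-modules. -/
noncomputable def canonicalM {ι' : Type u} (N : ι' → Type u)
    [∀ i, AddCommGroup (N i)] [∀ i, Module Rᵐᵒᵖ (N i)]
    (B : Type u) [AddCommGroup B] [Module R B] [Module Sᵐᵒᵖ B] [SMulCommClass R Sᵐᵒᵖ B] :
    RTensor R (∀ i, N i) B →ₗ[Sᵐᵒᵖ] ∀ i, RTensor R (N i) B :=
  LinearMap.pi fun i => mapMS R S (∀ j, N j) B (LinearMap.proj i)

end Canonical

section UnitMap

variable (M : Type u) [AddCommGroup M] [Module Rᵐᵒᵖ M]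
variable (B : Type u) [AddCommGroup B] [Module R B] [Module Rᵐᵒᵖ B] [SMulCommClass R Rᵐᵒᵖ B]

/-- For an `(R,R)`-bimodule `B` and a central-ish element `e` (e.g. `1 ∈ S` for a ring
extension `R → S`), the canonical map `M → M ⊗_R B`, `a ↦ a ⊗ e`, as a map of right
`R`-modules. -/
noncomputable def unitMap (e : B) (he : ∀ r : R, r • e = op r • e) :
    M →ₗ[Rᵐᵒᵖ] RTensor R M B where
  toFun m := rtmul R M B m e
  map_add' m m' := by
    show Submodule.Quotient.mk _ = Submodule.Quotient.mk _ + Submodule.Quotient.mk _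
    rw [← Submodule.Quotient.mk_add, TensorProduct.add_tmul]
  map_smul' r m := by
    show rtmul R M B (r • m) e = r • rtmul R M B m e
    rw [smul_rtmul]
    rw [rtmul, rtmul, Submodule.Quotient.eq]
    have : (r • e : B) = (r.unop : R) • e := (he r.unop).symm
    rw [this]
    exact Submodule.subset_span ⟨r.unop, m, e, by rw [op_unop]⟩

end UnitMap

end MTM
namespace MTM

open MulOpposite

variable (R : Type u) [Ring R] (S : Type u) [Ring S]

/-! ### pp formulas for `(R,S)`-bimodules -/

/-- The action of a formal coefficient `∑ (r,s)` of the bimodule language on an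
element of an `(R,S)`-bimodule: `b ↦ ∑ r b s`. -/
def cAct (c : List (R × S)) {B : Type v} [AddCommGroup B] [Module R B] [Module Sᵐᵒᵖ B]
    (b : B) : B :=
  (c.map fun p => p.1 • (op p.2 • b)).sum

/-- A pp formula for `(R,S)`-bimodules (equivalently, for right `Rᵒᵖ ⊗ S`-modules):
coefficients are formal sums of pairs `(r,s)`, acting by `x ↦ ∑ r x s`. -/
structure BiPP (ι : Type) : Type (max u 1) where
  κ : Type
  ε : Type
  [fintκ : Fintype κ]
  [fintε : Fintype ε]
  A : Matrix ι ε (List (R × S))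
  B : Matrix κ ε (List (R × S))

attribute [instance] BiPP.fintκ BiPP.fintε

variable {R S} in
/-- Solution set of a bimodule pp formula in an `(R,S)`-bimodule. -/
def BiPP.sol {ι : Type} [Fintype ι] (θ : BiPP R S ι) (Bm : Type v) [AddCommGroup Bm]
    [Module R Bm] [Module Sᵐᵒᵖ Bm] : Set (ι → Bm) :=
  { a | ∃ b : θ.κ → Bm, ∀ j : θ.ε,
      (∑ i, cAct R S (θ.A i j) (a i)) + (∑ k, cAct R S (θ.B k j) (b k)) = 0 }

/-- A bundled `(R,S)`-bimodule. -/
structure Bimod : Type (u + 1) where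
  carrier : Type u
  [addCommGroup : AddCommGroup carrier]
  [modR : Module R carrier]
  [modSop : Module Sᵐᵒᵖ carrier]
  [smulComm : SMulCommClass R Sᵐᵒᵖ carrier]

attribute [instance] Bimod.addCommGroup Bimod.modR Bimod.modSop Bimod.smulComm

instance : CoeSort (Bimod R S) (Type u) := ⟨Bimod.carrier⟩

/-- Bundling an `(R,S)`-bimodule. -/
def Bimod.of (B : Type u) [AddCommGroup B] [Module R B] [Module Sᵐᵒᵖ B]
    [SMulCommClass R Sᵐᵒᵖ B] : Bimod R S :=
  ⟨B⟩

/-- A pp-pair for `(R,S)`-bimodules. -/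
structure BiPPPair : Type (max u 1) where
  n : ℕ
  num : BiPP R S (Fin n)
  den : BiPP R S (Fin n)
  le : ∀ Bm : Bimod R S, den.sol Bm ⊆ num.sol Bm

variable {R S} in
/-- Closedness of a bimodule pp-pair on a bimodule. -/
def BiPPPair.ClosedOn (p : BiPPPair R S) (Bm : Type v) [AddCommGroup Bm] [Module R Bm]
    [Module Sᵐᵒᵖ Bm] : Prop :=
  p.num.sol Bm = p.den.sol Bm

/-- The class of bimodules defined by closure of a set of bimodule pp-pairs. -/
def biDefinedBy (Φ : Set (BiPPPair R S)) : Set (Bimod R S) :=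
  { Bm | ∀ p ∈ Φ, p.ClosedOn Bm }

/-- Definable subcategories of the category `R-Mod-S` of `(R,S)`-bimodules. -/
def IsDefinableBi (𝓑 : Set (Bimod R S)) : Prop :=
  ∃ Φ : Set (BiPPPair R S), 𝓑 = biDefinedBy R S Φ

/-- The smallest definable subcategory of `R-Mod-S` containing `X`. -/
def genBi (X : Set (Bimod R S)) : Set (Bimod R S) :=
  ⋂₀ { 𝓑 | IsDefinableBi R S 𝓑 ∧ X ⊆ 𝓑 }

/-- `θ ≤_𝓑 θ'` for a class `𝓑` of bimodules. -/
def BiLeOn (𝓑 : Set (Bimod R S)) {ι : Type} [Fintype ι] (θ θ' : BiPP R S ι) : Prop :=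
  ∀ Bm ∈ 𝓑, θ.sol Bm ⊆ θ'.sol Bm

/-! ### Partitioned tuples, `(σ:φ)` and atomicity with respect to a bimodule -/

/-- The index type of a `ν`-partitioned tuple: `k` blocks, the `t`-th of size `ν t`. -/
abbrev PIdx {k : ℕ} (ν : Fin k → ℕ) : Type := (t : Fin k) × Fin (ν t)

/-- The tensor product of matching partitioned tuples: the `k`-tuple
`(ā₁ ⊗ b̄₁, …, ā_k ⊗ b̄_k)` where `ā_t ⊗ b̄_t = ∑_j a_{tj} ⊗ b_{tj}`. -/
noncomputable def ptensor (M : Type u) [AddCommGroup M] [Module Rᵐᵒᵖ M] (B : Type u)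
    [AddCommGroup B] [Module R B] {k : ℕ} {ν : Fin k → ℕ}
    (a : PIdx ν → M) (b : PIdx ν → B) : Fin k → RTensor R M B :=
  fun t => ∑ j : Fin (ν t), rtmul R M B (a ⟨t, j⟩) (b ⟨t, j⟩)

variable {R}

/-- The pp-type of `ā` in `M` is generated by `φ`: `pp^M(ā) = {ψ : φ ≤ ψ}`. -/
def GeneratedBy {ι : Type} [Fintype ι] {M : Type u} [AddCommGroup M] [Module Rᵐᵒᵖ M]
    (a : ι → M) (φ : PP R ι) : Prop :=
  ∀ ψ : PP R ι, a ∈ ψ.sol M ↔ φ.Le ψ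

/-- The pp-type of `ā` in `M` is `𝒳`-generated by `φ`: `pp^M(ā) = {ψ : φ ≤_𝒳 ψ}`. -/
def GeneratedByOn (𝒳 : Set (ModuleCat.{u} Rᵐᵒᵖ)) {ι : Type} [Fintype ι] {M : Type u}
    [AddCommGroup M] [Module Rᵐᵒᵖ M] (a : ι → M) (φ : PP R ι) : Prop :=
  ∀ ψ : PP R ι, a ∈ ψ.sol M ↔ LeOn R 𝒳 φ ψ

variable (R)

/-- An assignment `(σ, φ) ↦ (σ:φ)` of a bimodule pp formula to each pp formula `σ`
for right `S`-modules (in `k` free variables) and each matching partitioned pp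
formula `φ` for right `R`-modules. -/
def ColonAsgn : Type (max u 1) :=
  ∀ (k : ℕ) (ν : Fin k → ℕ), PP S (Fin k) → PP R (PIdx ν) → BiPP R S (PIdx ν)

/-- The characterizing property of the assignment `(σ, φ) ↦ (σ:φ)`:
(1) if `ā ∈ φ(M)` and `b̄ ∈ (σ:φ)(B)` then `ā ⊗ b̄ ∈ σ(M ⊗_R B)`;
(2) if `pp^M(ā)` is generated by `φ` then `ā ⊗ b̄ ∈ σ(M ⊗_R B)` iff `b̄ ∈ (σ:φ)(B)`. -/
def ColonSpec (c : ColonAsgn R S) : Prop :=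
  ∀ (k : ℕ) (ν : Fin k → ℕ) (σ : PP S (Fin k)) (φ : PP R (PIdx ν))
    (M : Type u) [AddCommGroup M] [Module Rᵐᵒᵖ M]
    (Bm : Type u) [AddCommGroup Bm] [Module R Bm] [Module Sᵐᵒᵖ Bm]
    [SMulCommClass R Sᵐᵒᵖ Bm] (a : PIdx ν → M) (b : PIdx ν → Bm),
    (a ∈ φ.sol M → b ∈ (c k ν σ φ).sol Bm →
      ptensor R M Bm a b ∈ σ.sol (RTensor R M Bm)) ∧
    (GeneratedBy a φ →
      (ptensor R M Bm a b ∈ σ.sol (RTensor R M Bm) ↔ b ∈ (c k ν σ φ).sol Bm))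

/-- `M` is atomic with respect to the `(R,S)`-bimodule `B` (relative to a choice `c`
of the assignment `(σ,φ) ↦ (σ:φ)`): for every partitioned finite tuple `ā` from `M`
and every pp formula `σ` for right `S`-modules there is `φ ∈ pp^M(ā)` such that
`(σ:φ)(B)` is the largest among the `(σ:ψ)(B)` with `ψ ∈ pp^M(ā)`. -/
def AtomicWrt (c : ColonAsgn R S) (M : Type u) [AddCommGroup M] [Module Rᵐᵒᵖ M]
    (Bm : Type u) [AddCommGroup Bm] [Module R Bm] [Module Sᵐᵒᵖ Bm] : Prop :=
  ∀ (k : ℕ) (ν : Fin k → ℕ) (σ : PP S (Fin k)) (a : PIdx ν → M),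
    ∃ φ : PP R (PIdx ν), a ∈ φ.sol M ∧
      ∀ ψ : PP R (PIdx ν), a ∈ ψ.sol M → (c k ν σ ψ).sol Bm ⊆ (c k ν σ φ).sol Bm

/-! ### Mittag-Leffler modules, atomic modules -/

/-- `M` is Mittag-Leffler: the canonical map `M ⊗_R ∏ᵢ Lᵢ → ∏ᵢ (M ⊗_R Lᵢ)` is
injective for every family of left `R`-modules. -/
def IsML (M : Type u) [AddCommGroup M] [Module Rᵐᵒᵖ M] : Prop :=
  ∀ (ι' : Type u) (L : ι' → Type u) (_ : ∀ i, AddCommGroup (L i))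
    (_ : ∀ i, Module R (L i)), Function.Injective (canonicalL R M L)

/-- `M` is `𝒳`-Mittag-Leffler for a class `𝒳` of left `R`-modules. -/
def IsMLOn (𝒳 : Set (ModuleCat.{u} R)) (M : Type u) [AddCommGroup M] [Module Rᵐᵒᵖ M] :
    Prop :=
  ∀ (ι' : Type u) (L : ι' → Type u) (_ : ∀ i, AddCommGroup (L i))
    (_ : ∀ i, Module R (L i)),
    (∀ i, ModuleCat.of R (L i) ∈ 𝒳) → Function.Injective (canonicalL R M L)

/-- `M` is `D`-atomic: the pp-type of every finite tuple from `M` is `D`-finitely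
generated. -/
def AtomicOn (D : Set (ModuleCat.{u} Rᵐᵒᵖ)) (M : Type u) [AddCommGroup M]
    [Module Rᵐᵒᵖ M] : Prop :=
  ∀ (n : ℕ) (a : Fin n → M), ∃ φ : PP R (Fin n), GeneratedByOn D a φ

/-- The elementary dual `⟨K⟩ᵈ ⊆ Mod-R` of the definable subcategory of `R-Mod`
generated by a class `K` of left `R`-modules: it is defined by the pp-pairs for right
`R`-modules whose (elementary) dual pp-pair is closed on `⟨K⟩`. -/
def dualCat (K : Set (ModuleCat.{u} R)) : Set (ModuleCat.{u} Rᵐᵒᵖ) :=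
  definedBy R { p : PPPair R |
    ∀ L ∈ genL R K, (p.num.dual).solL L = (p.den.dual).solL L }

/-! ### Pure projectivity, finite genericity, pure cogenerators -/

/-- A left `R`-module is pure-projective if it is a direct summand of a direct sum of
finitely presented left `R`-modules. -/
def IsPureProjL (B : Type u) [AddCommGroup B] [Module R B] : Prop :=
  ∃ (ι : Type u) (_ : DecidableEq ι) (F : ι → Type u) (_ : ∀ i, AddCommGroup (F i))
    (_ : ∀ i, Module R (F i)) (_ : ∀ i, Module.FinitePresentation R (F i))
    (e : B →ₗ[R] DirectSum ι F) (p : DirectSum ι F →ₗ[R] B), p.comp e = LinearMap.id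

/-- `M` is finitely generic in the definable subcategory `D`: for every pp formula
`φ` there is a tuple from `M` whose pp-type is `D`-generated by `φ`. -/
def FinGeneric (D : Set (ModuleCat.{u} Rᵐᵒᵖ)) (M : Type u) [AddCommGroup M]
    [Module Rᵐᵒᵖ M] : Prop :=
  ModuleCat.of Rᵐᵒᵖ M ∈ D ∧
    ∀ (ι : Type) (_ : Fintype ι) (φ : PP R ι), ∃ a : ι → M, GeneratedByOn D a φ

variable {R S}

/-- The pp-type of a tuple in a bimodule is `𝓑`-generated by `θ`. -/
def BiGeneratedByOn (𝓑 : Set (Bimod R S)) {ι : Type} [Fintype ι] {Bm : Type u}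
    [AddCommGroup Bm] [Module R Bm] [Module Sᵐᵒᵖ Bm] (b : ι → Bm) (θ : BiPP R S ι) :
    Prop :=
  ∀ θ' : BiPP R S ι, b ∈ θ'.sol Bm ↔ BiLeOn R S 𝓑 θ θ'

variable (R S)

/-- A bimodule is finitely generic in a definable subcategory `𝓑` of `R-Mod-S`. -/
def FinGenericBi (𝓑 : Set (Bimod R S)) (Bm : Type u) [AddCommGroup Bm] [Module R Bm]
    [Module Sᵐᵒᵖ Bm] [SMulCommClass R Sᵐᵒᵖ Bm] : Prop :=
  Bimod.of R S Bm ∈ 𝓑 ∧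
    ∀ (ι : Type) (_ : Fintype ι) (θ : BiPP R S ι), ∃ b : ι → Bm, BiGeneratedByOn 𝓑 b θ

end MTM
namespace MTM

open MulOpposite

variable (R : Type u) [Ring R] (S : Type u) [Ring S]

/-! ### Tensor extension of definable subcategories -/

section TensorExt

variable (B : Type u) [AddCommGroup B] [Module R B] [Module Sᵐᵒᵖ B] [SMulCommClass R Sᵐᵒᵖ B]

/-- The set `{M ⊗_R B : M ∈ D}` of right `S`-modules. -/
noncomputable def tensorExtSet (D : Set (ModuleCat.{u} Rᵐᵒᵖ)) : Set (ModuleCat.{u} Sᵐᵒᵖ) :=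
  { N | ∃ M ∈ D, N = ModuleCat.of Sᵐᵒᵖ (RTensor R M B) }

/-- The tensor extension `D ⊗_R B`: the definable subcategory of `Mod-S` generated by
`{M ⊗_R B : M ∈ D}`. -/
noncomputable def tensorExt (D : Set (ModuleCat.{u} Rᵐᵒᵖ)) : Set (ModuleCat.{u} Sᵐᵒᵖ) :=
  gen S (tensorExtSet R S B D)

end TensorExt

/-- `D ⊗ 𝓑` for a definable subcategory `D` of `Mod-R` and a definable subcategory
`𝓑` of `R-Mod-S`: the definable subcategory of `Mod-S` generated by the modules
`M ⊗_R B` with `M ∈ D`, `B ∈ 𝓑`. -/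
noncomputable def tensorProd (D : Set (ModuleCat.{u} Rᵐᵒᵖ)) (𝓑 : Set (Bimod R S)) :
    Set (ModuleCat.{u} Sᵐᵒᵖ) :=
  gen S { N | ∃ M ∈ D, ∃ Bm ∈ 𝓑, N = ModuleCat.of Sᵐᵒᵖ (RTensor R M Bm) }

/-! ### Directed colimits -/

open CategoryTheory CategoryTheory.Limits in
/-- `M` is a directed colimit of modules satisfying `P`. -/
def IsDirectedColimitOf (M : ModuleCat.{u} Rᵐᵒᵖ) (P : ModuleCat.{u} Rᵐᵒᵖ → Prop) :
    Prop :=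
  ∃ (J : Type u) (_ : Preorder J) (_ : IsDirected J (· ≤ ·)) (_ : Nonempty J)
    (F : J ⥤ ModuleCat.{u} Rᵐᵒᵖ) (c : Cocone F),
    Nonempty (IsColimit c) ∧ Nonempty (c.pt ≅ M) ∧ ∀ j, P (F.obj j)

/-! ### Elementary embeddings of rings -/

open FirstOrder in
/-- `f : R →+* S` is an elementary embedding of rings: there is a model-theoretic
elementary embedding (for the first-order language of rings) whose underlying
function is `f`.  (Elementary embeddings preserve and reflect all first-order
formulas at all tuples of parameters from `R`.) -/
def IsElemRingEmb (f : R →+* S) : Prop :=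
  letI := FirstOrder.Ring.compatibleRingOfRing R
  letI := FirstOrder.Ring.compatibleRingOfRing S
  ∃ F : Language.ring.ElementaryEmbedding R S, ∀ r : R, F r = f r

/-! ### Bimodule structures along a ring homomorphism -/

section AlongHom

variable (f : R →+* S)

/-- The left `R`-module structure on `S` along `f`. -/
def modLeft : Module R S := Module.compHom S f

/-- The right `R`-module structure on `S` along `f`. -/
def modRight : Module Rᵐᵒᵖ S := Module.compHom S (RingHom.op f)

/-- `S` is an `(R,S)`-bimodule along `f`. -/
theorem smulComm_RS :
    letI := modLeft R S f
    SMulCommClass R Sᵐᵒᵖ S := by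
  letI := modLeft R S f
  constructor
  intro r s x
  show f r * (x * s.unop) = (f r * x) * s.unop
  rw [mul_assoc]

/-- `S` is an `(R,R)`-bimodule along `f`. -/
theorem smulComm_RR :
    letI := modLeft R S f
    letI := modRight R S f
    SMulCommClass R Rᵐᵒᵖ S := by
  letI := modLeft R S f
  letI := modRight R S f
  constructor
  intro r r' x
  show f r * (x * f r'.unop) = (f r * x) * f r'.unop
  rw [mul_assoc]

end AlongHom

end MTM
namespace MTM

open MulOpposite

variable (R : Type u) [Ring R] (S : Type u) [Ring S]

/-- A pure embedding of `(R,S)`-bimodules: an injective map of bimodules which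
reflects solution sets of bimodule pp formulas. -/
def IsBiPureEmb {B B' : Type u} [AddCommGroup B] [Module R B] [Module Sᵐᵒᵖ B]
    [AddCommGroup B'] [Module R B'] [Module Sᵐᵒᵖ B']
    (g : B →ₗ[R] B') (_ : ∀ (s : Sᵐᵒᵖ) (b : B), g (s • b) = s • g b) : Prop :=
  Function.Injective g ∧
    ∀ (ι : Type) (_ : Fintype ι) (θ : BiPP R S ι) (a : ι → B),
      (fun i => g (a i)) ∈ θ.sol B' → a ∈ θ.sol B

/-- The ring `S`, viewed as an `(R,S)`-bimodule (and as an `(R,R)`-bimodule) along a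
ring homomorphism `f : R →+* S`. -/
def SAlong (f : R →+* S) : Type u := S

namespace SAlong

variable (f : R →+* S)

instance : AddCommGroup (SAlong R S f) := inferInstanceAs (AddCommGroup S)
instance : Module R (SAlong R S f) := Module.compHom S f
instance : Module Sᵐᵒᵖ (SAlong R S f) := inferInstanceAs (Module Sᵐᵒᵖ S)
instance : Module Rᵐᵒᵖ (SAlong R S f) := Module.compHom S (RingHom.op f)

instance : SMulCommClass R Sᵐᵒᵖ (SAlong R S f) := smulComm_RS R S f

instance : SMulCommClass R Rᵐᵒᵖ (SAlong R S f) := smulComm_RR R S f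

/-- The element `1 ∈ S`. -/
def one : SAlong R S f := (1 : S)

theorem smul_one : ∀ r : R, r • (one R S f) = op r • (one R S f) := by
  intro r
  show f r * (1 : S) = (1 : S) * f r
  rw [mul_one, one_mul]

end SAlong

end MTM
namespace MTM

section IntVanish
open MulOpposite TensorProduct


theorem exists_fin_tmul {R : Type*} [CommRing R] {M N : Type*} [AddCommGroup M] [AddCommGroup N]
    [Module R M] [Module R N] (x : TensorProduct R M N) :
    ∃ (n : ℕ) (m : Fin n → M) (b : Fin n → N), x = ∑ i, m i ⊗ₜ[R] b i := by
  obtain ⟨S, hS⟩ := TensorProduct.exists_finset x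
  refine ⟨S.card, fun i => ((S.equivFin.symm i : S) : M × N).1,
    fun i => ((S.equivFin.symm i : S) : M × N).2, ?_⟩
  rw [hS, ← Finset.sum_coe_sort S]
  exact Fintype.sum_equiv S.equivFin (fun i => (i : M × N).1 ⊗ₜ[R] (i : M × N).2)
    _ (fun i => by simp)

/-- General equational criterion for vanishing in a tensor product over ℤ. -/
theorem int_vanish {M N : Type u} [AddCommGroup M] [AddCommGroup N] {ι : Type} [Fintype ι]
    (m : ι → M) (n : ι → N) (h : ∑ i, m i ⊗ₜ[ℤ] n i = 0) :
    ∃ (p q : ℕ) (mx : Fin p → M) (a : (ι ⊕ Fin p) → Fin q → ℤ) (y : Fin q → N),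
      (∀ w, ∑ t, a t w • Sum.elim m mx t = 0) ∧
      (∀ i, n i = ∑ w, a (Sum.inl i) w • y w) ∧
      (∀ e, (0 : N) = ∑ w, a (Sum.inr e) w • y w) := by
  classical
  let F := ((ULift.{u} ι ⊕ M) →₀ ℤ)
  let G : F →ₗ[ℤ] M := Finsupp.linearCombination ℤ (Sum.elim (fun i => m i.down) _root_.id)
  have G_single : ∀ t r, G (Finsupp.single t r)
      = r • Sum.elim (fun i : ULift ι => m i.down) _root_.id t := by
    intro t r
    show Finsupp.linearCombination ℤ _ (Finsupp.single t r) = _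
    rw [Finsupp.linearCombination_single]
  have G_surj : Function.Surjective G := fun x =>
    ⟨Finsupp.single (Sum.inr x) 1, by simp [G_single]⟩
  let en : TensorProduct ℤ F N := ∑ i, Finsupp.single (Sum.inl ⟨i⟩) (1 : ℤ) ⊗ₜ n i
  have hen : en = ∑ i, Finsupp.single (Sum.inl ⟨i⟩) (1 : ℤ) ⊗ₜ n i := rfl
  have en_ker : en ∈ LinearMap.ker (LinearMap.rTensor N G) := by
    rw [LinearMap.mem_ker, hen, map_sum]
    simp only [LinearMap.rTensor_tmul, G_single, one_smul, Sum.elim_inl]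
    exact h
  have hexact : Function.Exact (LinearMap.rTensor N (LinearMap.ker G).subtype)
      (LinearMap.rTensor N G) :=
    rTensor_exact (M := ↥(LinearMap.ker G)) N G.exact_subtype_ker_map G_surj
  have en_range : en ∈ LinearMap.range (LinearMap.rTensor N (LinearMap.ker G).subtype) := by
    rw [hexact.linearMap_ker_eq] at en_ker
    exact en_ker
  obtain ⟨kn, hkn⟩ := en_range
  obtain ⟨q, kk, yy, rfl⟩ := exists_fin_tmul kn
  rw [map_sum] at hkn
  simp only [LinearMap.rTensor_tmul, Submodule.coe_subtype] at hkn
  have ev : ∀ t₀ : ULift.{u} ι ⊕ M, ∑ w, ((kk w : F) t₀) • yy w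
      = ∑ i, (Finsupp.single (Sum.inl ⟨i⟩) (1 : ℤ) : F) t₀ • n i := by
    intro t₀
    have := congrArg (TensorProduct.lift ((LinearMap.lsmul ℤ N).comp (Finsupp.lapply t₀))) hkn
    simpa only [hen, map_sum, TensorProduct.lift.tmul, LinearMap.coe_comp,
      Function.comp_apply, Finsupp.lapply_apply, LinearMap.lsmul_apply] using this
  set s : Finset M := (Finset.univ.biUnion fun w : Fin q => (kk w : F).support).image
      (Sum.elim (fun _ => (0 : M)) _root_.id) with hs
  have hmem : ∀ (w : Fin q) (x : M), (Sum.inr x ∈ (kk w : F).support) → x ∈ s := by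
    intro w x hx
    rw [hs]
    exact Finset.mem_image.2 ⟨Sum.inr x, Finset.mem_biUnion.2 ⟨w, Finset.mem_univ _, hx⟩, rfl⟩
  set ind : ι ⊕ Fin s.card → ULift.{u} ι ⊕ M :=
    Sum.elim (fun i : ι => (Sum.inl ⟨i⟩ : ULift.{u} ι ⊕ M))
      (fun e => Sum.inr ((s.equivFin.symm e : s) : M)) with hind
  refine ⟨s.card, q, fun e => ((s.equivFin.symm e : s) : M),
    fun t w => (kk w : F) (ind t), yy, ?_, ?_, ?_⟩
  · intro w
    have hker : ((kk w : F).sum fun t r => r • Sum.elim (fun i : ULift ι => m i.down) _root_.id t) = 0 := by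
      have hk := LinearMap.mem_ker.1 (kk w).2
      rw [← Finsupp.linearCombination_apply]
      exact hk
    have hinj : ∀ x ∈ Finset.univ, ∀ y ∈ Finset.univ, ind x = ind y → x = y := by
      rintro (i | e) - (i' | e') - hh
      · simp only [hind, Sum.elim_inl, Sum.inl.injEq, ULift.up_inj] at hh
        exact congrArg Sum.inl hh
      · simp [hind] at hh
      · simp [hind] at hh
      · simp only [hind, Sum.elim_inr, Sum.inr.injEq] at hh
        exact congrArg Sum.inr (s.equivFin.symm.injective (Subtype.ext hh))
    have hsub : (kk w : F).support ⊆ Finset.univ.image ind := by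
      intro x hx
      rcases x with i | x
      · refine Finset.mem_image.2 ⟨Sum.inl i.down, Finset.mem_univ _, ?_⟩
        simp [hind]
      · obtain ⟨e, he⟩ := s.equivFin.symm.surjective ⟨x, hmem w x hx⟩
        refine Finset.mem_image.2 ⟨Sum.inr e, Finset.mem_univ _, ?_⟩
        simp [hind, he]
    have hsum := Finsupp.sum_of_support_subset (kk w : F) hsub
      (fun t r => r • Sum.elim (fun i : ULift ι => m i.down) _root_.id t)
      (fun i _ => zero_smul ℤ _)
    rw [hsum, Finset.sum_image hinj] at hker
    rw [← hker]
    refine Finset.sum_congr rfl ?_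
    rintro (i | e) - <;> rfl
  · intro i
    have h2 := ev (Sum.inl ⟨i⟩)
    simp only [Finsupp.single_apply, Sum.inl.injEq, ULift.up_inj, ite_smul, one_smul,
      zero_smul, Finset.sum_ite_eq' Finset.univ i, Finset.mem_univ, if_true] at h2
    exact h2.symm
  · intro e
    have h3 := ev (Sum.inr ((s.equivFin.symm e : s) : M))
    simp only [Finsupp.single_apply, reduceCtorEq, if_false, zero_smul,
      Finset.sum_const_zero] at h3
    exact h3.symm


end IntVanish

/-! ### Auxiliary machinery for statement 6 -/

section Statement6Aux

open MulOpposite TensorProduct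

variable {R : Type u} [Ring R]

/-- Solution sets of pp formulas are preserved by module maps. -/
theorem PP.sol_map' {ι : Type} [Fintype ι] (ψ : PP R ι) {N N' : Type u} [AddCommGroup N]
    [Module Rᵐᵒᵖ N] [AddCommGroup N'] [Module Rᵐᵒᵖ N'] (f : N →ₗ[Rᵐᵒᵖ] N') {x : ι → N}
    (hx : x ∈ ψ.sol N) : (fun i => f (x i)) ∈ ψ.sol N' := by
  obtain ⟨w, hw⟩ := hx
  refine ⟨fun n => f (w n), fun j => ?_⟩
  have := congrArg f (hw j)
  simpa only [map_add, map_sum, map_smul, map_zero] using this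

variable {G E : Type} [Fintype G] [Fintype E] [DecidableEq G]

/-- The finitely presented module `(G → R) / ⟨relations rc⟩`. -/
def QMod (rc : E → G → R) : Type u := (G → R) ⧸ Submodule.span Rᵐᵒᵖ (Set.range rc)

instance (rc : E → G → R) : AddCommGroup (QMod rc) :=
  inferInstanceAs (AddCommGroup ((G → R) ⧸ Submodule.span Rᵐᵒᵖ (Set.range rc)))

instance (rc : E → G → R) : Module Rᵐᵒᵖ (QMod rc) :=
  inferInstanceAs (Module Rᵐᵒᵖ ((G → R) ⧸ Submodule.span Rᵐᵒᵖ (Set.range rc)))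

/-- The generators of `QMod rc`. -/
def qgen (rc : E → G → R) (g : G) : QMod rc :=
  Submodule.Quotient.mk (fun g' => if g' = g then 1 else 0)

theorem qeval (rc : E → G → R) (w : G → R) :
    ∑ g, op (w g) • qgen rc g = Submodule.Quotient.mk w := by
  have h1 : ∀ g : G, op (w g) • qgen rc g
      = Submodule.mkQ _ (op (w g) • fun g' => if g' = g then (1 : R) else 0) := fun g => rfl
  rw [Finset.sum_congr rfl (fun g _ => h1 g)]
  show (∑ g, Submodule.mkQ (Submodule.span Rᵐᵒᵖ (Set.range rc))
      (op (w g) • fun g' => if g' = g then (1 : R) else 0) :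
      (G → R) ⧸ Submodule.span Rᵐᵒᵖ (Set.range rc)) = Submodule.Quotient.mk w
  rw [← map_sum (Submodule.mkQ (Submodule.span Rᵐᵒᵖ (Set.range rc)))
      (fun g => op (w g) • fun g' => if g' = g then (1 : R) else 0) Finset.univ]
  have h2 : (∑ x : G, op (w x) • fun g' => if g' = x then (1 : R) else 0) = w := by
    funext g'
    simp only [Finset.sum_apply, Pi.smul_apply, MulOpposite.smul_eq_mul_unop, unop_op, ite_mul,
      one_mul, zero_mul]
    simp
  rw [h2]
  rfl

theorem qrel (rc : E → G → R) (e : E) : ∑ g, op (rc e g) • qgen rc g = 0 := by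
  rw [qeval]
  exact (Submodule.Quotient.mk_eq_zero _).2 (Submodule.subset_span ⟨e, rfl⟩)

/-- Mapping out of `QMod rc` to any module with elements satisfying the relations. -/
noncomputable def qlift (rc : E → G → R) (N : Type u) [AddCommGroup N] [Module Rᵐᵒᵖ N]
    (v : G → N) (hv : ∀ e, ∑ g, op (rc e g) • v g = 0) : QMod rc →ₗ[Rᵐᵒᵖ] N := by
  refine Submodule.liftQ _
    { toFun := fun w => ∑ g, op (w g) • v g
      map_add' := by
        intro w u
        simp only [Pi.add_apply, op_add, add_smul, Finset.sum_add_distrib]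
      map_smul' := by
        intro c w
        simp only [Pi.smul_apply, MulOpposite.smul_eq_mul_unop, op_mul, op_unop,
          RingHom.id_apply, mul_smul, ← Finset.smul_sum] } ?_
  rw [Submodule.span_le]
  rintro _ ⟨e, rfl⟩
  exact hv e

theorem qlift_gen (rc : E → G → R) (N : Type u) [AddCommGroup N] [Module Rᵐᵒᵖ N]
    (v : G → N) (hv : ∀ e, ∑ g, op (rc e g) • v g = 0) (g : G) :
    qlift rc N v hv (qgen rc g) = v g := by
  show ∑ g', op (if g' = g then (1 : R) else 0) • v g' = v g
  have h1 : ∀ g' : G, op (if g' = g then (1 : R) else 0) • v g'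
      = if g' = g then v g' else 0 := by
    intro g'; split_ifs <;> simp
  rw [Finset.sum_congr rfl (fun g' _ => h1 g')]
  simp

variable {ι H : Type} [Fintype ι] [Fintype H]

/-- The pp formula determined by a finite relation system on `ι ⊕ H`. -/
def phiOf (rc : E → (ι ⊕ H) → R) : PP R ι where
  κ := H
  ε := E
  A := fun i e => rc e (Sum.inl i)
  B := fun h e => rc e (Sum.inr h)

theorem mem_sol_phiOf [DecidableEq (ι ⊕ H)] (rc : E → (ι ⊕ H) → R) {N : Type u}
    [AddCommGroup N] [Module Rᵐᵒᵖ N] (x : ι → N) :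
    x ∈ (phiOf rc).sol N ↔ ∃ w : H → N, ∀ e, ∑ g, op (rc e g) • Sum.elim x w g = 0 := by
  constructor <;> rintro ⟨w, hw⟩ <;> refine ⟨w, fun e => ?_⟩
  · rw [Fintype.sum_sum_type]
    exact hw e
  · have := hw e
    rw [Fintype.sum_sum_type] at this
    exact this

theorem sol_phiOf_qgen [DecidableEq (ι ⊕ H)] (rc : E → (ι ⊕ H) → R) :
    (fun i => qgen rc (Sum.inl i)) ∈ (phiOf rc).sol (QMod rc) := by
  apply (mem_sol_phiOf rc _).2
  refine ⟨fun h => qgen rc (Sum.inr h), fun e => ?_⟩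
  have h1 : (Sum.elim (fun i => qgen rc (Sum.inl i)) (fun h => qgen rc (Sum.inr h)))
      = qgen rc := by
    funext g; rcases g with i | h <;> rfl
  rw [h1]
  exact qrel rc e

theorem generatedBy_phiOf [DecidableEq (ι ⊕ H)] (rc : E → (ι ⊕ H) → R) :
    GeneratedBy (fun i => qgen rc (Sum.inl i)) (phiOf rc) := by
  intro ψ
  constructor
  · intro hsol N _ _ x hx
    obtain ⟨w, hw⟩ := (mem_sol_phiOf rc x).1 hx
    have h2 := PP.sol_map' ψ (qlift rc N (Sum.elim x w) hw) hsol
    have h3 : (fun i => qlift rc N (Sum.elim x w) hw (qgen rc (Sum.inl i))) = x := by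
      funext i
      rw [qlift_gen]
      rfl
    rwa [h3] at h2
  · intro hle
    exact hle (QMod rc) (sol_phiOf_qgen rc)

end Statement6Aux


section Statement6Constr

open MulOpposite TensorProduct

variable {R : Type u} [Ring R]

theorem lhs_eq {S : Type u} [Ring S] {k : ℕ} {ν : Fin k → ℕ} (σ : PP S (Fin k))
    (N : Type u) [AddCommGroup N] [Module Rᵐᵒᵖ N]
    (B : Type u) [AddCommGroup B] [Module R B] [Module Sᵐᵒᵖ B] [SMulCommClass R Sᵐᵒᵖ B]
    (v : PIdx ν → N) (b : PIdx ν → B) (nD : σ.κ → ℕ)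
    (uv : (Σ l : σ.κ, Fin (nD l)) → N) (bb : (Σ l : σ.κ, Fin (nD l)) → B) (j : σ.ε) :
    ∑ t, op (σ.A t j) • ptensor R N B v b t
      + ∑ l, op (σ.B l j) •
          (Submodule.Quotient.mk (∑ i : Fin (nD l), uv ⟨l, i⟩ ⊗ₜ[ℤ] bb ⟨l, i⟩) : RTensor R N B)
    = Submodule.Quotient.mk (∑ p : PIdx ν, v p ⊗ₜ[ℤ] ((op (σ.A p.1 j) : Sᵐᵒᵖ) • b p)
        + ∑ q : (Σ l : σ.κ, Fin (nD l)), uv q ⊗ₜ[ℤ] ((op (σ.B q.1 j) : Sᵐᵒᵖ) • bb q)) := by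
  have hA : ∀ t : Fin k, op (σ.A t j) • ptensor R N B v b t
      = Submodule.Quotient.mk (∑ j' : Fin (ν t), v ⟨t, j'⟩ ⊗ₜ[ℤ] (op (σ.A t j) • b ⟨t, j'⟩)) := by
    intro t
    unfold ptensor
    rw [Finset.smul_sum]
    have h1 : ∀ j' : Fin (ν t), op (σ.A t j) • rtmul R N B (v ⟨t, j'⟩) (b ⟨t, j'⟩)
        = Submodule.mkQ _ (v ⟨t, j'⟩ ⊗ₜ[ℤ] (op (σ.A t j) • b ⟨t, j'⟩)) := fun j' => rfl
    rw [Finset.sum_congr rfl (fun j' _ => h1 j'), ← map_sum]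
    rfl
  have hB : ∀ l : σ.κ, op (σ.B l j) •
        (Submodule.Quotient.mk (∑ i : Fin (nD l), uv ⟨l, i⟩ ⊗ₜ[ℤ] bb ⟨l, i⟩) : RTensor R N B)
      = Submodule.Quotient.mk (∑ i : Fin (nD l), uv ⟨l, i⟩ ⊗ₜ[ℤ] (op (σ.B l j) • bb ⟨l, i⟩)) := by
    intro l
    rw [smul_mk]
    congr 1
    rw [map_sum]
    rfl
  rw [Finset.sum_congr rfl (fun t _ => hA t), Finset.sum_congr rfl (fun l _ => hB l)]
  simp only [← Submodule.mkQ_apply, ← map_sum, ← map_add]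
  congr 1
  rw [← Finset.univ_sigma_univ, Finset.sum_sigma, ← Finset.univ_sigma_univ, Finset.sum_sigma]

theorem split_eq {K : Type} [Fintype K] {k : ℕ} {ν : Fin k → ℕ}
    (N B : Type u) [AddCommGroup N] [AddCommGroup B] [Module R B] {nD : K → ℕ}
    (vA : PIdx ν → N) (vD : (Σ l : K, Fin (nD l)) → N) {r : ℕ} (vV vU : Fin r → N)
    (z : Fin r → ℤ) (rr : Fin r → R) (bb' : Fin r → B)
    (cA : PIdx ν → B) (cD : (Σ l : K, Fin (nD l)) → B) :
    ∑ p : PIdx ν, vA p ⊗ₜ[ℤ] cA p + ∑ q : (Σ l : K, Fin (nD l)), vD q ⊗ₜ[ℤ] cD q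
    = (∑ i, z i • (vV i ⊗ₜ[ℤ] bb' i - vU i ⊗ₜ[ℤ] (rr i • bb' i)))
      + ∑ s : ((PIdx ν ⊕ (Σ l : K, Fin (nD l))) ⊕ (Fin r ⊕ Fin r)),
          (Sum.elim (Sum.elim vA vD) (Sum.elim vV vU) s) ⊗ₜ[ℤ]
          (Sum.elim (Sum.elim cA cD)
            (Sum.elim (fun i => (-(z i)) • bb' i) (fun i => z i • (rr i • bb' i))) s) := by
  rw [Fintype.sum_sum_type, Fintype.sum_sum_type, Fintype.sum_sum_type]
  simp only [Sum.elim_inl, Sum.elim_inr, tmul_neg, tmul_smul, smul_sub, neg_smul,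
    Finset.sum_sub_distrib, Finset.sum_neg_distrib, Finset.sum_neg_distrib]
  abel

variable {K E : Type} [Fintype K] [Fintype E]

/-- Index type for the regrouped vanishing sum. -/
abbrev TIdx (ν : Fin k → ℕ) (nD : K → ℕ) (r : ℕ) : Type :=
  (PIdx ν ⊕ (Σ l : K, Fin (nD l))) ⊕ (Fin r ⊕ Fin r)

/-- Index type of the generators. -/
abbrev GIdx (ν : Fin k → ℕ) (nD : K → ℕ) (ρ pn : E → ℕ) : Type :=
  PIdx ν ⊕ ((Σ l : K, Fin (nD l)) ⊕
    ((Σ j : E, Fin (ρ j)) ⊕ ((Σ j : E, Fin (ρ j)) ⊕ (Σ j : E, Fin (pn j)))))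

variable (ν : Fin k → ℕ) (nD : K → ℕ) (ρ pn qn : E → ℕ)

def gD (q : Σ l : K, Fin (nD l)) : GIdx ν nD ρ pn := Sum.inr (Sum.inl q)

def gV (w : Σ j : E, Fin (ρ j)) : GIdx ν nD ρ pn := Sum.inr (Sum.inr (Sum.inl w))

def gU (w : Σ j : E, Fin (ρ j)) : GIdx ν nD ρ pn := Sum.inr (Sum.inr (Sum.inr (Sum.inl w)))

def gX (w : Σ j : E, Fin (pn j)) : GIdx ν nD ρ pn := Sum.inr (Sum.inr (Sum.inr (Sum.inr w)))

def melF (j : E) : TIdx ν nD (ρ j) → GIdx ν nD ρ pn :=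
  Sum.elim (Sum.elim Sum.inl (gD ν nD ρ pn))
    (Sum.elim (fun i => gV ν nD ρ pn ⟨j, i⟩) (fun i => gU ν nD ρ pn ⟨j, i⟩))

def xgenF (j : E) : (TIdx ν nD (ρ j) ⊕ Fin (pn j)) → GIdx ν nD ρ pn :=
  Sum.elim (melF ν nD ρ pn j) (fun e => gX ν nD ρ pn ⟨j, e⟩)

def singleFn {G : Type} [DecidableEq G] (g₀ : G) (r : R) : G → R :=
  fun g => if g = g₀ then r else 0

abbrev ERIdx (ρ qn : E → ℕ) : Type := (Σ j : E, Fin (ρ j)) ⊕ (Σ j : E, Fin (qn j))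

variable [DecidableEq (GIdx (E := E) ν nD ρ pn)]

noncomputable def rcF (rr : ∀ j : E, Fin (ρ j) → R)
    (aco : ∀ j : E, (TIdx ν nD (ρ j) ⊕ Fin (pn j)) → Fin (qn j) → ℤ) :
    ERIdx ρ qn → GIdx ν nD ρ pn → R :=
  Sum.elim
    (fun w => singleFn (gV ν nD ρ pn w) (1 : R) - singleFn (gU ν nD ρ pn w) (rr w.1 w.2))
    (fun w => ∑ t, singleFn (xgenF ν nD ρ pn w.1 t) ((aco w.1 t w.2 : ℤ) : R))

theorem eval_singleFn {G : Type} [Fintype G] [DecidableEq G] {N : Type u} [AddCommGroup N]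
    [Module Rᵐᵒᵖ N] (g₀ : G) (r : R) (v : G → N) :
    ∑ g, op (singleFn g₀ r g) • v g = op r • v g₀ := by
  have h1 : ∀ g, op (singleFn g₀ r g) • v g = if g = g₀ then op r • v g else 0 := by
    intro g; unfold singleFn; split_ifs <;> simp
  rw [Finset.sum_congr rfl fun g _ => h1 g]
  simp

theorem eval_rcF_inl (rr : ∀ j : E, Fin (ρ j) → R)
    (aco : ∀ j : E, (TIdx ν nD (ρ j) ⊕ Fin (pn j)) → Fin (qn j) → ℤ)
    {N : Type u} [AddCommGroup N] [Module Rᵐᵒᵖ N] (w : Σ j : E, Fin (ρ j))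
    (v : GIdx ν nD ρ pn → N) :
    ∑ g, op (rcF ν nD ρ pn qn rr aco (Sum.inl w) g) • v g
      = v (gV ν nD ρ pn w) - op (rr w.1 w.2) • v (gU ν nD ρ pn w) := by
  have h1 : ∀ g, op (rcF ν nD ρ pn qn rr aco (Sum.inl w) g) • v g
      = op (singleFn (gV ν nD ρ pn w) (1 : R) g) • v g
        - op (singleFn (gU ν nD ρ pn w) (rr w.1 w.2) g) • v g := by
    intro g
    show op ((singleFn (gV ν nD ρ pn w) (1 : R) - singleFn (gU ν nD ρ pn w) (rr w.1 w.2)) g) • v g = _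
    rw [Pi.sub_apply, op_sub, sub_smul]
  rw [Finset.sum_congr rfl fun g _ => h1 g, Finset.sum_sub_distrib, eval_singleFn,
    eval_singleFn, op_one, one_smul]

theorem eval_rcF_inr (rr : ∀ j : E, Fin (ρ j) → R)
    (aco : ∀ j : E, (TIdx ν nD (ρ j) ⊕ Fin (pn j)) → Fin (qn j) → ℤ)
    {N : Type u} [AddCommGroup N] [Module Rᵐᵒᵖ N] (w : Σ j : E, Fin (qn j))
    (v : GIdx ν nD ρ pn → N) :
    ∑ g, op (rcF ν nD ρ pn qn rr aco (Sum.inr w) g) • v g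
      = ∑ t, aco w.1 t w.2 • v (xgenF ν nD ρ pn w.1 t) := by
  have h1 : ∀ g, op (rcF ν nD ρ pn qn rr aco (Sum.inr w) g) • v g
      = ∑ t, op (singleFn (xgenF ν nD ρ pn w.1 t) ((aco w.1 t w.2 : ℤ) : R) g) • v g := by
    intro g
    show op ((∑ t, singleFn (xgenF ν nD ρ pn w.1 t) ((aco w.1 t w.2 : ℤ) : R)) g) • v g = _
    rw [Finset.sum_apply]
    have h2 : op (∑ t, singleFn (xgenF ν nD ρ pn w.1 t) ((aco w.1 t w.2 : ℤ) : R) g)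
        = ∑ t, op (singleFn (xgenF ν nD ρ pn w.1 t) ((aco w.1 t w.2 : ℤ) : R) g) :=
      map_sum (MulOpposite.opAddEquiv : R ≃+ Rᵐᵒᵖ) _ Finset.univ
    rw [h2, Finset.sum_smul]
  rw [Finset.sum_congr rfl fun g _ => h1 g, Finset.sum_comm]
  refine Finset.sum_congr rfl fun t _ => ?_
  rw [eval_singleFn, op_intCast, Int.cast_smul_eq_zsmul]

end Statement6Constr


section Statement6Key

open MulOpposite TensorProduct

theorem s6key {R S : Type u} [Ring R] [Ring S] {k : ℕ} {ν : Fin k → ℕ} (σ : PP S (Fin k))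
    (M B : Type u) [AddCommGroup M] [Module Rᵐᵒᵖ M] [AddCommGroup B] [Module R B]
    [Module Sᵐᵒᵖ B] [SMulCommClass R Sᵐᵒᵖ B]
    (a : PIdx ν → M) (b : PIdx ν → B)
    (nD : σ.κ → ℕ) (mm : (Σ l : σ.κ, Fin (nD l)) → M) (bb : (Σ l : σ.κ, Fin (nD l)) → B)
    (ρ pn qn : σ.ε → ℕ)
    (z : ∀ j : σ.ε, Fin (ρ j) → ℤ) (rr : ∀ j : σ.ε, Fin (ρ j) → R)
    (mu : ∀ j : σ.ε, Fin (ρ j) → M) (bb' : ∀ j : σ.ε, Fin (ρ j) → B)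
    (mx : ∀ j : σ.ε, Fin (pn j) → M)
    (aco : ∀ j : σ.ε, (TIdx ν nD (ρ j) ⊕ Fin (pn j)) → Fin (qn j) → ℤ)
    (yB : ∀ j : σ.ε, Fin (qn j) → B)
    (hrel : ∀ (j : σ.ε) (w : Fin (qn j)), ∑ t, aco j t w •
        Sum.elim (Sum.elim (Sum.elim a mm)
          (Sum.elim (fun i => op (rr j i) • mu j i) (fun i => mu j i))) (mx j) t = 0)
    (hdec : ∀ (j : σ.ε) (s : TIdx ν nD (ρ j)),
        Sum.elim (Sum.elim (fun p : PIdx ν => (op (σ.A p.1 j) : Sᵐᵒᵖ) • b p)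
            (fun q => (op (σ.B q.1 j) : Sᵐᵒᵖ) • bb q))
          (Sum.elim (fun i => (-(z j i)) • bb' j i) (fun i => z j i • (rr j i • bb' j i))) s
        = ∑ w, aco j (Sum.inl s) w • yB j w)
    (hdec0 : ∀ (j : σ.ε) (e : Fin (pn j)), (0 : B) = ∑ w, aco j (Sum.inr e) w • yB j w) :
    ∃ (φ : PP R (PIdx ν)) (M₀ : Type u) (_ : AddCommGroup M₀) (_ : Module Rᵐᵒᵖ M₀)
      (a₀ : PIdx ν → M₀), a ∈ φ.sol M ∧ GeneratedBy a₀ φ ∧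
        ptensor R M₀ B a₀ b ∈ σ.sol (RTensor R M₀ B) := by
  letI : DecidableEq (GIdx (E := σ.ε) ν nD ρ pn) := Classical.decEq _
  refine ⟨phiOf (rcF ν nD ρ pn qn rr aco), QMod (rcF ν nD ρ pn qn rr aco), inferInstance,
    inferInstance, fun p => qgen (rcF ν nD ρ pn qn rr aco) (Sum.inl p), ?_,
    generatedBy_phiOf (rcF ν nD ρ pn qn rr aco), ?_⟩
  · -- `a ∈ φ.sol M`
    apply (mem_sol_phiOf (rcF ν nD ρ pn qn rr aco) a).2
    refine ⟨fun h => (Sum.elim a (Sum.elim mm (Sum.elim (fun w => op (rr w.1 w.2) • mu w.1 w.2)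
      (Sum.elim (fun w => mu w.1 w.2) (fun w => mx w.1 w.2)))) : GIdx ν nD ρ pn → M)
        (Sum.inr h), fun e => ?_⟩
    have helim : Sum.elim a (fun h => (Sum.elim a (Sum.elim mm
        (Sum.elim (fun w => op (rr w.1 w.2) • mu w.1 w.2)
          (Sum.elim (fun w => mu w.1 w.2) (fun w => mx w.1 w.2)))) : GIdx ν nD ρ pn → M)
            (Sum.inr h))
        = (Sum.elim a (Sum.elim mm (Sum.elim (fun w => op (rr w.1 w.2) • mu w.1 w.2)
            (Sum.elim (fun w => mu w.1 w.2) (fun w => mx w.1 w.2)))) : GIdx ν nD ρ pn → M) := by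
      funext g; rcases g with p | hh <;> rfl
    rw [helim]
    rcases e with w | w
    · rw [eval_rcF_inl]
      exact sub_eq_zero.2 rfl
    · rw [eval_rcF_inr]
      have hx : ∀ t, (Sum.elim a (Sum.elim mm (Sum.elim (fun w => op (rr w.1 w.2) • mu w.1 w.2)
          (Sum.elim (fun w => mu w.1 w.2) (fun w => mx w.1 w.2)))) : GIdx ν nD ρ pn → M)
            (xgenF ν nD ρ pn w.1 t)
          = Sum.elim (Sum.elim (Sum.elim a mm)
              (Sum.elim (fun i => op (rr w.1 i) • mu w.1 i) (fun i => mu w.1 i))) (mx w.1) t := by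
        rintro (((p | q) | (i | i)) | e) <;> rfl
      rw [Finset.sum_congr rfl fun t _ => by rw [hx t]]
      exact hrel w.1 w.2
  · -- the tensor condition in `M₀ ⊗ B`
    show ∃ d : σ.κ → RTensor R (QMod (rcF ν nD ρ pn qn rr aco)) B, ∀ j : σ.ε,
      (∑ i, op (σ.A i j) • ptensor R (QMod (rcF ν nD ρ pn qn rr aco)) B
        (fun p => qgen (rcF ν nD ρ pn qn rr aco) (Sum.inl p)) b i)
      + (∑ l, op (σ.B l j) • d l) = 0
    refine ⟨fun l => (Submodule.Quotient.mk (∑ i : Fin (nD l),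
      qgen (rcF ν nD ρ pn qn rr aco) (gD ν nD ρ pn ⟨l, i⟩) ⊗ₜ[ℤ] bb ⟨l, i⟩)
        : RTensor R (QMod (rcF ν nD ρ pn qn rr aco)) B), fun j => ?_⟩
    have h1 := lhs_eq (R := R) σ (QMod (rcF ν nD ρ pn qn rr aco)) B
      (fun p => qgen (rcF ν nD ρ pn qn rr aco) (Sum.inl p)) b nD
      (fun q => qgen (rcF ν nD ρ pn qn rr aco) (gD ν nD ρ pn q)) bb j
    refine h1.trans ?_
    rw [Submodule.Quotient.mk_eq_zero]
    have h2 := split_eq (R := R) (QMod (rcF ν nD ρ pn qn rr aco)) B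
      (fun p => qgen (rcF ν nD ρ pn qn rr aco) (Sum.inl p))
      (fun q => qgen (rcF ν nD ρ pn qn rr aco) (gD ν nD ρ pn q))
      (fun i => qgen (rcF ν nD ρ pn qn rr aco) (gV ν nD ρ pn ⟨j, i⟩))
      (fun i => qgen (rcF ν nD ρ pn qn rr aco) (gU ν nD ρ pn ⟨j, i⟩))
      (z j) (rr j) (bb' j)
      (fun p => (op (σ.A p.1 j) : Sᵐᵒᵖ) • b p) (fun q => (op (σ.B q.1 j) : Sᵐᵒᵖ) • bb q)
    rw [h2]
    have hVU : ∀ i : Fin (ρ j), qgen (rcF ν nD ρ pn qn rr aco) (gV ν nD ρ pn ⟨j, i⟩)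
        = op (rr j i) • qgen (rcF ν nD ρ pn qn rr aco) (gU ν nD ρ pn ⟨j, i⟩) := by
      intro i
      have h0 := qrel (rcF ν nD ρ pn qn rr aco) (Sum.inl ⟨j, i⟩)
      rw [eval_rcF_inl] at h0
      exact sub_eq_zero.1 h0
    have hT : ∑ s : TIdx ν nD (ρ j),
        (Sum.elim (Sum.elim (fun p => qgen (rcF ν nD ρ pn qn rr aco) (Sum.inl p))
            (fun q => qgen (rcF ν nD ρ pn qn rr aco) (gD ν nD ρ pn q)))
          (Sum.elim (fun i => qgen (rcF ν nD ρ pn qn rr aco) (gV ν nD ρ pn ⟨j, i⟩))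
            (fun i => qgen (rcF ν nD ρ pn qn rr aco) (gU ν nD ρ pn ⟨j, i⟩))) s) ⊗ₜ[ℤ]
        (Sum.elim (Sum.elim (fun p => (op (σ.A p.1 j) : Sᵐᵒᵖ) • b p)
            (fun q => (op (σ.B q.1 j) : Sᵐᵒᵖ) • bb q))
          (Sum.elim (fun i => (-(z j i)) • bb' j i)
            (fun i => z j i • (rr j i • bb' j i))) s) = 0 := by
      have hmel : ∀ s : TIdx ν nD (ρ j),
          (Sum.elim (Sum.elim (fun p => qgen (rcF ν nD ρ pn qn rr aco) (Sum.inl p))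
              (fun q => qgen (rcF ν nD ρ pn qn rr aco) (gD ν nD ρ pn q)))
            (Sum.elim (fun i => qgen (rcF ν nD ρ pn qn rr aco) (gV ν nD ρ pn ⟨j, i⟩))
              (fun i => qgen (rcF ν nD ρ pn qn rr aco) (gU ν nD ρ pn ⟨j, i⟩))) s)
          = qgen (rcF ν nD ρ pn qn rr aco) (melF ν nD ρ pn j s) := by
        rintro ((p | q) | (i | i)) <;> rfl
      calc ∑ s : TIdx ν nD (ρ j), _ ⊗ₜ[ℤ] _
          = ∑ s : TIdx ν nD (ρ j), qgen (rcF ν nD ρ pn qn rr aco) (melF ν nD ρ pn j s) ⊗ₜ[ℤ]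
              (∑ w, aco j (Sum.inl s) w • yB j w) :=
            Finset.sum_congr rfl fun s _ => by rw [hmel s, hdec j s]
        _ = ∑ s : TIdx ν nD (ρ j), ∑ w, aco j (Sum.inl s) w •
              (qgen (rcF ν nD ρ pn qn rr aco) (melF ν nD ρ pn j s) ⊗ₜ[ℤ] yB j w) := by
            simp only [tmul_sum, tmul_smul]
        _ = ∑ w, ∑ s : TIdx ν nD (ρ j), aco j (Sum.inl s) w •
              (qgen (rcF ν nD ρ pn qn rr aco) (melF ν nD ρ pn j s) ⊗ₜ[ℤ] yB j w) :=
            Finset.sum_comm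
        _ = ∑ w, (∑ s : TIdx ν nD (ρ j), aco j (Sum.inl s) w •
              qgen (rcF ν nD ρ pn qn rr aco) (melF ν nD ρ pn j s)) ⊗ₜ[ℤ] yB j w := by
            refine Finset.sum_congr rfl fun w _ => ?_
            rw [sum_tmul]
            exact Finset.sum_congr rfl fun s _ => (smul_tmul' _ _ _).symm
        _ = ∑ w, (-(∑ e, aco j (Sum.inr e) w •
              qgen (rcF ν nD ρ pn qn rr aco) (gX ν nD ρ pn ⟨j, e⟩))) ⊗ₜ[ℤ] yB j w := by
            refine Finset.sum_congr rfl fun w _ => ?_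
            congr 1
            have h0 := qrel (rcF ν nD ρ pn qn rr aco) (Sum.inr ⟨j, w⟩)
            rw [eval_rcF_inr, Fintype.sum_sum_type] at h0
            exact eq_neg_of_add_eq_zero_left h0
        _ = -∑ e, qgen (rcF ν nD ρ pn qn rr aco) (gX ν nD ρ pn ⟨j, e⟩) ⊗ₜ[ℤ]
              (∑ w, aco j (Sum.inr e) w • yB j w) := by
            have hstep : ∀ w, (-(∑ e, aco j (Sum.inr e) w •
                qgen (rcF ν nD ρ pn qn rr aco) (gX ν nD ρ pn ⟨j, e⟩))) ⊗ₜ[ℤ] yB j w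
                = -∑ e, aco j (Sum.inr e) w •
                    (qgen (rcF ν nD ρ pn qn rr aco) (gX ν nD ρ pn ⟨j, e⟩) ⊗ₜ[ℤ] yB j w) := by
              intro w
              rw [neg_tmul, sum_tmul]
              exact neg_inj.mpr (Finset.sum_congr rfl fun e _ => (smul_tmul' _ _ _).symm)
            rw [Finset.sum_congr rfl fun w _ => hstep w, Finset.sum_neg_distrib,
              Finset.sum_comm]
            refine neg_inj.mpr (Finset.sum_congr rfl fun e _ => ?_)
            rw [tmul_sum]
            exact Finset.sum_congr rfl fun w _ => (tmul_smul _ _ _).symm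
        _ = 0 := by
            have hz : ∀ e, qgen (rcF ν nD ρ pn qn rr aco) (gX ν nD ρ pn ⟨j, e⟩) ⊗ₜ[ℤ]
                (∑ w, aco j (Sum.inr e) w • yB j w) = 0 := fun e => by
              rw [← hdec0 j e, tmul_zero]
            rw [Finset.sum_congr rfl fun e _ => hz e]
            simp
    rw [hT, add_zero]
    refine Submodule.sum_mem _ fun i _ => Submodule.smul_mem _ _ (Submodule.subset_span ?_)
    exact ⟨rr j i, qgen (rcF ν nD ρ pn qn rr aco) (gU ν nD ρ pn ⟨j, i⟩), bb' j i,
      by rw [hVU i]⟩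

end Statement6Key


/-- For a right `R`-module `M`, an `(R,S)`-bimodule `B`, a
(partitioned) pp formula `σ` for right `S`-modules, a partitioned tuple `ā` from `M`
and a matching tuple `b̄` from `B` : `ā ⊗ b̄ ∈ σ(M ⊗_R B)` iff there is a matching
partitioned pp formula `φ` for right `R`-modules with `ā ∈ φ(M)` and
`b̄ ∈ (σ:φ)(B)`.  (Here `(σ,φ) ↦ (σ:φ)` is any assignment satisfying the
characterizing properties of the colon construction.) -/
theorem statement6 (R S : Type u) [Ring R] [Ring S]
    (c : ColonAsgn R S) (hc : ColonSpec R S c)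
    (k : ℕ) (ν : Fin k → ℕ) (σ : PP S (Fin k))
    (M : Type u) [AddCommGroup M] [Module Rᵐᵒᵖ M]
    (B : Type u) [AddCommGroup B] [Module R B] [Module Sᵐᵒᵖ B] [SMulCommClass R Sᵐᵒᵖ B]
    (a : PIdx ν → M) (b : PIdx ν → B) :
    ptensor R M B a b ∈ σ.sol (RTensor R M B) ↔
      ∃ φ : PP R (PIdx ν), a ∈ φ.sol M ∧ b ∈ (c k ν σ φ).sol B := by
  classical
  constructor
  · intro h
    obtain ⟨d, hd⟩ := h
    choose D hD using fun l => Submodule.Quotient.mk_surjective _ (d l)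
    choose nD mmf bbf hfin using fun l => exists_fin_tmul (R := ℤ) (D l)
    have hDl : ∀ l, d l
        = (Submodule.Quotient.mk (∑ i, mmf l i ⊗ₜ[ℤ] bbf l i) : RTensor R M B) := by
      intro l
      rw [← hD l, hfin l]
    have hEE : ∀ j, (∑ p : PIdx ν, a p ⊗ₜ[ℤ] ((op (σ.A p.1 j) : Sᵐᵒᵖ) • b p)
        + ∑ q : (Σ l : σ.κ, Fin (nD l)),
            mmf q.1 q.2 ⊗ₜ[ℤ] ((op (σ.B q.1 j) : Sᵐᵒᵖ) • bbf q.1 q.2))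
        ∈ Submodule.span ℤ { x : TensorProduct ℤ M B |
            ∃ (r : R) (m : M) (bq : B), x = (op r • m) ⊗ₜ[ℤ] bq - m ⊗ₜ[ℤ] (r • bq) } := by
      intro j
      show _ ∈ tensorRel R M B
      rw [← Submodule.Quotient.mk_eq_zero (tensorRel R M B)]
      have h1 := lhs_eq (R := R) σ M B a b nD (fun q => mmf q.1 q.2) (fun q => bbf q.1 q.2) j
      have h2 : ∑ l, op (σ.B l j) •
          (Submodule.Quotient.mk (∑ i, mmf l i ⊗ₜ[ℤ] bbf l i) : RTensor R M B)
          = ∑ l, op (σ.B l j) • d l :=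
        Finset.sum_congr rfl fun l _ => by rw [hDl l]
      rw [← h1, h2]
      exact hd j
    choose ρ z gsub hgsub using fun j => Submodule.mem_span_set'.1 (hEE j)
    choose rr mu bb' hrel' using fun j i => (gsub j i).2
    have hsub : ∀ j, ∑ i, z j i • ((op (rr j i) • mu j i) ⊗ₜ[ℤ] bb' j i
          - mu j i ⊗ₜ[ℤ] (rr j i • bb' j i))
        = ∑ p : PIdx ν, a p ⊗ₜ[ℤ] ((op (σ.A p.1 j) : Sᵐᵒᵖ) • b p)
          + ∑ q : (Σ l : σ.κ, Fin (nD l)),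
              mmf q.1 q.2 ⊗ₜ[ℤ] ((op (σ.B q.1 j) : Sᵐᵒᵖ) • bbf q.1 q.2) := by
      intro j
      rw [← hgsub j]
      exact Finset.sum_congr rfl fun i _ => by rw [hrel' j i]
    have hvan : ∀ j, ∑ s : TIdx ν nD (ρ j),
        (Sum.elim (Sum.elim a (fun q : (Σ l : σ.κ, Fin (nD l)) => mmf q.1 q.2))
          (Sum.elim (fun i => op (rr j i) • mu j i) (fun i => mu j i)) s) ⊗ₜ[ℤ]
        (Sum.elim (Sum.elim (fun p : PIdx ν => (op (σ.A p.1 j) : Sᵐᵒᵖ) • b p)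
            (fun q => (op (σ.B q.1 j) : Sᵐᵒᵖ) • bbf q.1 q.2))
          (Sum.elim (fun i => (-(z j i)) • bb' j i)
            (fun i => z j i • (rr j i • bb' j i))) s) = 0 := by
      intro j
      have h3 := split_eq (R := R) M B a (fun q : (Σ l : σ.κ, Fin (nD l)) => mmf q.1 q.2)
        (fun i => op (rr j i) • mu j i) (fun i => mu j i) (z j) (rr j) (bb' j)
        (fun p : PIdx ν => (op (σ.A p.1 j) : Sᵐᵒᵖ) • b p)
        (fun q => (op (σ.B q.1 j) : Sᵐᵒᵖ) • bbf q.1 q.2)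
      rw [hsub j] at h3
      exact (left_eq_add.1 h3)
    choose pn qn mx aco yB hrel hdec hdec0 using fun j => int_vanish _ _ (hvan j)
    obtain ⟨φ, M₀, iAG, iM, a₀, hφM, hgen, hsol⟩ :=
      s6key σ M B a b nD (fun q => mmf q.1 q.2) (fun q => bbf q.1 q.2) ρ pn qn z rr mu bb'
        mx aco yB hrel hdec hdec0
    exact ⟨φ, hφM, ((hc k ν σ φ M₀ B a₀ b).2 hgen).1 hsol⟩
  · rintro ⟨φ, ha, hb⟩
    exact (hc k ν σ φ M B a b).1 ha hb

end MTM
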